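/- arXiv:2112.10394 — 3 statements merged into one kernel-verified Lean document; each statement's English description precedes it below -/
import Mathlib

section
/- Let (a_γ) be a family of measurable nonnegative functions on a finite measure space Ω such that ∫ a_γ^{γ+1} ≤ C(γ+1) for all γ ≥ 1 and ‖a_γ‖_{L¹} ≤ C̃ uniformly, and suppose a_γ converges weakly in L² to a limit a as γ → ∞. Then by interpolation ‖a_γ‖_{L^q} ≤ C̃^θ (C(γ+1))^{(1−θ)/(γ+1)} with 1/q = θ + (1−θ)/(γ+1), and hence lim sup over q → ∞ of ‖a‖_{L^q} ≤ 1, i.e. ‖a‖_{L^∞} ≤ 1. -/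
open MeasureTheory Filter
open scoped ENNReal

lemma interp_aux {α : Type*} [MeasurableSpace α] (μ : Measure α)
    (C Ct : ℝ) (hC : 0 ≤ C) (hCt : 0 ≤ Ct)
    (a : α → ℝ) (γ : ℝ) (hγ : 1 ≤ γ)
    (hmeas : Measurable a) (hpos : ∀ x, 0 ≤ a x)
    (hpow : ∫⁻ x, ENNReal.ofReal (a x ^ (γ + 1)) ∂μ ≤ ENNReal.ofReal (C * (γ + 1)))
    (hmass : ∫⁻ x, ENNReal.ofReal (a x) ∂μ ≤ ENNReal.ofReal Ct)
    (q θ : ℝ) (hq : 1 < q) (hθ : 0 ≤ θ)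
    (hI : 1 / q = θ + (1 - θ) / (γ + 1)) :
    eLpNorm a (ENNReal.ofReal q) μ
      ≤ ENNReal.ofReal (Ct ^ θ * (C * (γ + 1)) ^ ((1 - θ) / (γ + 1))) := by
  have hq0 : 0 < q := lt_trans one_pos hq
  have hγ0 : (0:ℝ) < γ + 1 := by linarith
  have key : q * (θ * γ + 1) = γ + 1 := by
    field_simp at hI
    nlinarith [hI]
  have hθ1 : θ < 1 := by nlinarith [mul_lt_mul_of_pos_right hq (show (0:ℝ) < γ by linarith)]
  have hf : Measurable fun x => ENNReal.ofReal (a x) := hmeas.ennreal_ofReal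
  have hqne : ENNReal.ofReal q ≠ 0 := by
    simp [ENNReal.ofReal_eq_zero]; linarith
  have hsn : eLpNorm a (ENNReal.ofReal q) μ
      = (∫⁻ x, (ENNReal.ofReal (a x)) ^ q ∂μ) ^ (1 / q) := by
    rw [eLpNorm_eq_lintegral_rpow_enorm_toReal hqne ENNReal.ofReal_ne_top,
      ENNReal.toReal_ofReal hq0.le]
    congr 1
    refine lintegral_congr fun x => ?_
    rw [Real.enorm_of_nonneg (hpos x)]
  have hIp : ∫⁻ x, (ENNReal.ofReal (a x)) ^ (γ + 1) ∂μ ≤ ENNReal.ofReal (C * (γ + 1)) := by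
    refine le_trans (le_of_eq ?_) hpow
    refine lintegral_congr fun x => ?_
    rw [ENNReal.ofReal_rpow_of_nonneg (hpos x) hγ0.le]
  rw [hsn]
  rcases eq_or_lt_of_le hθ with hθ0 | hθpos
  · -- θ = 0, q = γ + 1
    have hqeq : q = γ + 1 := by rw [← hθ0] at key; linarith
    subst hqeq
    rw [← hθ0]
    calc (∫⁻ x, ENNReal.ofReal (a x) ^ (γ+1) ∂μ) ^ (1/(γ+1))
        ≤ (ENNReal.ofReal (C * (γ + 1))) ^ (1/(γ+1)) :=
          ENNReal.rpow_le_rpow hIp (by positivity)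
      _ = ENNReal.ofReal (Ct ^ (0:ℝ) * (C * (γ + 1)) ^ ((1 - 0) / (γ + 1))) := by
          rw [ENNReal.ofReal_rpow_of_nonneg (by positivity) (by positivity)]
          norm_num
  · -- θ > 0 : Hölder
    have hqθ1 : q * θ < 1 := by nlinarith
    have hqθ0 : 0 < q * θ := by positivity
    have hconj : Real.HolderConjugate (1/(q*θ)) (1/(1 - q*θ)) := by
      rw [Real.holderConjugate_iff]; constructor
      · rw [lt_div_iff₀ hqθ0]; linarith
      · rw [one_div, one_div, inv_inv, inv_inv]; ring
    have hkey2 : q * (1 - θ) = (γ + 1) * (1 - q * θ) := by nlinarith [key]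
    have hHold := ENNReal.lintegral_mul_le_Lp_mul_Lq μ hconj
      (hf.aemeasurable.pow_const (q*θ)) (hf.aemeasurable.pow_const (q*(1-θ)))
    -- simplify Hölder
    have e0 : ∀ x : ℝ≥0∞, x ^ (q*θ) * x ^ (q*(1-θ)) = x ^ q := fun x => by
      rw [← ENNReal.rpow_add_of_nonneg _ _ (by positivity) (by nlinarith)]
      ring_nf
    have e1 : ∀ x : ℝ≥0∞, (x ^ (q*θ)) ^ (1/(q*θ)) = x := fun x => by
      rw [← ENNReal.rpow_mul, mul_one_div, div_self hqθ0.ne', ENNReal.rpow_one]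
    have e2 : ∀ x : ℝ≥0∞, (x ^ (q*(1-θ))) ^ (1/(1-q*θ)) = x ^ (γ+1) := fun x => by
      rw [← ENNReal.rpow_mul]
      congr 1
      rw [mul_one_div, hkey2, mul_div_assoc, div_self (by linarith), mul_one]
    simp only [Pi.mul_apply, e0, e1, e2, one_div_one_div] at hHold
    calc (∫⁻ x, ENNReal.ofReal (a x) ^ q ∂μ) ^ (1/q)
        ≤ ((∫⁻ x, ENNReal.ofReal (a x) ∂μ) ^ (q*θ)
            * (∫⁻ x, ENNReal.ofReal (a x) ^ (γ+1) ∂μ) ^ (1 - q*θ)) ^ (1/q) :=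
          ENNReal.rpow_le_rpow hHold (by positivity)
      _ ≤ ((ENNReal.ofReal Ct) ^ (q*θ)
            * (ENNReal.ofReal (C*(γ+1))) ^ (1 - q*θ)) ^ (1/q) := by
          refine ENNReal.rpow_le_rpow (mul_le_mul'
            (ENNReal.rpow_le_rpow hmass hqθ0.le)
            (ENNReal.rpow_le_rpow hIp (by linarith))) (le_of_lt (div_pos one_pos hq0))
      _ = ENNReal.ofReal (Ct ^ θ * (C * (γ + 1)) ^ ((1 - θ) / (γ + 1))) := by
          have eθ : q * θ * (1/q) = θ := by field_simp
          have eβ : (1 - q*θ) * (1/q) = (1-θ)/(γ+1) := by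
            rw [mul_one_div, div_eq_div_iff hq0.ne' hγ0.ne']
            nlinarith [hkey2]
          rw [ENNReal.mul_rpow_of_nonneg _ _ (div_pos one_pos hq0).le,
            ← ENNReal.rpow_mul, ← ENNReal.rpow_mul, eθ, eβ,
            ENNReal.ofReal_rpow_of_nonneg hCt hθ,
            ENNReal.ofReal_rpow_of_nonneg (mul_nonneg hC hγ0.le)
              (div_nonneg (by linarith) hγ0.le),
            ← ENNReal.ofReal_mul (Real.rpow_nonneg hCt θ)]

lemma upper_aux {α : Type*} [MeasurableSpace α] (μ : Measure α) [IsFiniteMeasure μ]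
    (C : ℝ) (hC : 0 ≤ C) (a : α → ℝ) (γ : ℝ) (hγ : 1 ≤ γ)
    (hmeas : Measurable a) (hpos : ∀ x, 0 ≤ a x)
    (hpow : ∫⁻ x, ENNReal.ofReal (a x ^ (γ + 1)) ∂μ ≤ ENNReal.ofReal (C * (γ + 1)))
    (E : Set α) (hE : MeasurableSet E) :
    ∫ x in E, a x ∂μ ≤ ((C+1)*(γ+1)) ^ (1/(γ+1)) * (μ E).toReal ^ (γ/(γ+1)) := by
  have hγ0 : (0:ℝ) < γ + 1 := by linarith
  have heq : ∫ x in E, a x ∂μ = (∫⁻ x in E, ENNReal.ofReal (a x) ∂μ).toReal :=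
    integral_eq_lintegral_of_nonneg_ae (Eventually.of_forall fun x => hpos x)
      hmeas.aestronglyMeasurable
  rw [heq]
  refine ENNReal.toReal_le_of_le_ofReal (by positivity) ?_
  have hconj : Real.HolderConjugate (γ+1) ((γ+1)/γ) := by
    rw [Real.holderConjugate_iff]; constructor
    · linarith
    · field_simp
      ring
  have hH := ENNReal.lintegral_mul_le_Lp_mul_Lq (μ.restrict E) hconj
    hmeas.ennreal_ofReal.aemeasurable (aemeasurable_const (b := (1:ℝ≥0∞)))
  simp only [Pi.mul_apply, mul_one, ENNReal.one_rpow, lintegral_one,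
    Measure.restrict_apply_univ] at hH
  have h2 : ∫⁻ x in E, (ENNReal.ofReal (a x)) ^ (γ+1) ∂μ ≤ ENNReal.ofReal ((C+1) * (γ + 1)) := by
    calc ∫⁻ x in E, (ENNReal.ofReal (a x)) ^ (γ+1) ∂μ
        ≤ ∫⁻ x, (ENNReal.ofReal (a x)) ^ (γ+1) ∂μ := setLIntegral_le_lintegral _ _
      _ = ∫⁻ x, ENNReal.ofReal (a x ^ (γ+1)) ∂μ :=
          lintegral_congr fun x => ENNReal.ofReal_rpow_of_nonneg (hpos x) hγ0.le
      _ ≤ ENNReal.ofReal (C * (γ + 1)) := hpow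
      _ ≤ ENNReal.ofReal ((C+1) * (γ + 1)) := by
          apply ENNReal.ofReal_le_ofReal; nlinarith
  have hμE : μ E ≠ ⊤ := (measure_lt_top μ E).ne
  calc ∫⁻ x in E, ENNReal.ofReal (a x) ∂μ
      ≤ (∫⁻ x in E, (ENNReal.ofReal (a x)) ^ (γ+1) ∂μ) ^ (1/(γ+1))
        * (μ E) ^ (1/((γ+1)/γ)) := hH
    _ ≤ (ENNReal.ofReal ((C+1) * (γ + 1))) ^ (1/(γ+1)) * (μ E) ^ (1/((γ+1)/γ)) := by
        gcongr
    _ = ENNReal.ofReal (((C+1)*(γ+1)) ^ (1/(γ+1)) * (μ E).toReal ^ (γ/(γ+1))) := by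
        rw [one_div_div]
        conv_rhs => rw [ENNReal.ofReal_mul (by positivity),
          ← ENNReal.ofReal_rpow_of_nonneg (by positivity) (by positivity),
          ← ENNReal.ofReal_rpow_of_nonneg ENNReal.toReal_nonneg
            (div_nonneg (by linarith) hγ0.le),
          ENNReal.ofReal_toReal hμE]

lemma lim_aux (C : ℝ) (hC : 0 ≤ C) (m : ℝ) :
    Tendsto (fun γ:ℝ => ((C+1)*(γ+1)) ^ (1/(γ+1)) * m ^ (γ/(γ+1))) atTop (nhds m) := by
  have hC1 : (0:ℝ) < C + 1 := by linarith
  have h1 : Tendsto (fun γ:ℝ => ((C+1)*(γ+1)) ^ (1/(γ+1))) atTop (nhds 1) := by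
    have ht : Tendsto (fun γ:ℝ => (C+1)*(γ+1)) atTop atTop :=
      (tendsto_atTop_add_const_right _ 1 tendsto_id).const_mul_atTop hC1
    have := (tendsto_rpow_div_mul_add (C+1) 1 0 zero_ne_one).comp ht
    refine this.congr' ?_
    filter_upwards [eventually_ge_atTop (1:ℝ)] with γ hγ
    have hγ0 : (0:ℝ) < γ + 1 := by linarith
    simp only [Function.comp_apply]
    congr 1
    rw [one_mul, add_zero]
    rw [div_eq_div_iff (by positivity) hγ0.ne']
    ring
  have h2 : Tendsto (fun γ:ℝ => m ^ (γ/(γ+1))) atTop (nhds m) := by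
    have hq : Tendsto (fun γ:ℝ => γ/(γ+1)) atTop (nhds 1) := by
      have hinv : Tendsto (fun γ:ℝ => (γ+1)⁻¹) atTop (nhds 0) :=
        tendsto_inv_atTop_zero.comp (tendsto_atTop_add_const_right _ 1 tendsto_id)
      have := (tendsto_const_nhds (x := (1:ℝ)) (f := atTop)).sub hinv
      rw [sub_zero] at this
      refine this.congr' ?_
      filter_upwards [eventually_ge_atTop (1:ℝ)] with γ hγ
      have hγ0 : (0:ℝ) < γ + 1 := by linarith
      field_simp
      ring
    have hc : ContinuousAt (fun t : ℝ => m ^ t) 1 := Real.continuousAt_const_rpow' one_ne_zero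
    have := hc.tendsto.comp hq
    rw [Real.rpow_one] at this
    exact this
  have := h1.mul h2
  rw [one_mul] at this
  exact this

/-- Uniform `L^{γ+1}` bounds `∫ a_γ^{γ+1} ≤ C(γ+1)` and uniform mass bounds `∫ a_γ ≤ C̃`
give, by interpolation, `‖a_γ‖_{L^q} ≤ C̃^θ (C(γ+1))^{(1−θ)/(γ+1)}` with `1/q = θ + (1−θ)/(γ+1)`;
consequently the weak `L²` limit `a` satisfies `‖a‖_{L^∞} ≤ 1`. -/
theorem Linfty_bound_of_weak_limit {α : Type*} [MeasurableSpace α] (μ : Measure α)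
    [IsFiniteMeasure μ] (C Ct : ℝ) (hC : 0 ≤ C) (hCt : 0 ≤ Ct)
    (a : ℝ → α → ℝ) (alim : α → ℝ)
    (hmeas : ∀ γ, Measurable (a γ)) (hpos : ∀ γ x, 0 ≤ a γ x)
    (hpow : ∀ γ ≥ (1 : ℝ), ∫⁻ x, ENNReal.ofReal (a γ x ^ (γ + 1)) ∂μ ≤ ENNReal.ofReal (C * (γ + 1)))
    (hmass : ∀ γ ≥ (1 : ℝ), ∫⁻ x, ENNReal.ofReal (a γ x) ∂μ ≤ ENNReal.ofReal Ct)
    (halim : MemLp alim 2 μ)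
    (hweak : ∀ g : α → ℝ, MemLp g 2 μ →
      Tendsto (fun γ : ℝ => ∫ x, a γ x * g x ∂μ) atTop (nhds (∫ x, alim x * g x ∂μ))) :
    (∀ γ ≥ (1 : ℝ), ∀ q θ : ℝ, 1 < q → 0 ≤ θ →
        1 / q = θ + (1 - θ) / (γ + 1) →
        eLpNorm (a γ) (ENNReal.ofReal q) μ
          ≤ ENNReal.ofReal (Ct ^ θ * (C * (γ + 1)) ^ ((1 - θ) / (γ + 1))))
      ∧ eLpNorm alim ⊤ μ ≤ 1 := by
  constructor
  · intro γ hγ q θ hq hθ hI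
    exact interp_aux μ C Ct hC hCt (a γ) γ hγ (hmeas γ) (hpos γ) (hpow γ hγ) (hmass γ hγ) q θ hq hθ hI
  -- Part 2
  -- weak convergence of set integrals
  have hsetlim : ∀ E : Set α, MeasurableSet E →
      Tendsto (fun γ : ℝ => ∫ x in E, a γ x ∂μ) atTop (nhds (∫ x in E, alim x ∂μ)) := by
    intro E hE
    have hg : MemLp (E.indicator fun _ => (1:ℝ)) 2 μ := (memLp_const 1).indicator hE
    have hrw : ∀ f : α → ℝ, ∫ x, f x * (E.indicator fun _ => (1:ℝ)) x ∂μ = ∫ x in E, f x ∂μ := by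
      intro f
      rw [← integral_indicator hE]
      congr 1
      funext x
      by_cases hx : x ∈ E <;> simp [hx]
    have := hweak _ hg
    simpa only [hrw] using this
  -- bounds on set integrals of the limit
  have hlow : ∀ E : Set α, MeasurableSet E → 0 ≤ ∫ x in E, alim x ∂μ := by
    intro E hE
    exact ge_of_tendsto (hsetlim E hE)
      (Eventually.of_forall fun γ => setIntegral_nonneg hE fun x _ => hpos γ x)
  have hupp : ∀ E : Set α, MeasurableSet E → ∫ x in E, alim x ∂μ ≤ (μ E).toReal := by
    intro E hE
    refine le_of_tendsto_of_tendsto (hsetlim E hE) (lim_aux C hC (μ E).toReal) ?_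
    filter_upwards [eventually_ge_atTop (1:ℝ)] with γ hγ
    exact upper_aux μ C hC (a γ) γ hγ (hmeas γ) (hpos γ) (hpow γ hγ) E hE
  -- pass to a measurable representative
  obtain ⟨b, hbmeas, hbae⟩ : ∃ b : α → ℝ, Measurable b ∧ alim =ᵐ[μ] b := by
    obtain ⟨b, hb1, hb2⟩ := halim.aestronglyMeasurable
    exact ⟨b, hb1.measurable, hb2⟩
  have halim_int : Integrable alim μ := halim.integrable (by norm_num)
  have hbint : Integrable b μ := halim_int.congr hbae
  have hEnull : μ {x | 1 < b x} = 0 := by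
    set E := {x | 1 < b x} with hEdef
    have hE : MeasurableSet E := measurableSet_lt measurable_const hbmeas
    have hcong : ∫ x in E, alim x ∂μ = ∫ x in E, b x ∂μ :=
      setIntegral_congr_ae hE (hbae.mono fun x hx _ => hx)
    have h1 : ∫ x in E, b x ∂μ ≤ (μ E).toReal := hcong ▸ hupp E hE
    have hint1 : IntegrableOn (fun x => b x - 1) E μ :=
      (hbint.sub (integrable_const 1)).integrableOn
    have h2 : ∫ x in E, (b x - 1) ∂μ ≤ 0 := by
      rw [integral_sub hbint.integrableOn (integrable_const 1).integrableOn]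
      simp only [integral_const, Measure.real, Measure.restrict_apply_univ, smul_eq_mul, mul_one]
      linarith
    have h3 : 0 ≤ᵐ[μ.restrict E] fun x => b x - 1 :=
      (ae_restrict_mem hE).mono fun x hx => by
        have hx' : 1 < b x := hx
        simp only [Pi.zero_apply]
        linarith
    have h4 : ∫ x in E, (b x - 1) ∂μ = 0 := le_antisymm h2 (integral_nonneg_of_ae h3)
    have h5 := (setIntegral_eq_zero_iff_of_nonneg_ae h3 hint1).mp h4
    have h6 : ∀ᵐ _x ∂μ.restrict E, False := by
      filter_upwards [h5, ae_restrict_mem hE] with x hx1 hx2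
      have hx' : 1 < b x := hx2
      have : b x - 1 = 0 := hx1
      linarith
    rw [← Measure.restrict_eq_zero]
    exact MeasureTheory.ae_eq_bot.mp (Filter.eventually_false_iff_eq_bot.mp h6)
  have hFnull : μ {x | b x < 0} = 0 := by
    set F := {x | b x < 0} with hFdef
    have hF : MeasurableSet F := measurableSet_lt hbmeas measurable_const
    have hcong : ∫ x in F, alim x ∂μ = ∫ x in F, b x ∂μ :=
      setIntegral_congr_ae hF (hbae.mono fun x hx _ => hx)
    have h1 : 0 ≤ ∫ x in F, b x ∂μ := hcong ▸ hlow F hF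
    have hint1 : IntegrableOn (fun x => -b x) F μ := hbint.neg.integrableOn
    have h2 : ∫ x in F, (-b x) ∂μ ≤ 0 := by
      rw [integral_neg]
      linarith
    have h3 : 0 ≤ᵐ[μ.restrict F] fun x => -b x :=
      (ae_restrict_mem hF).mono fun x hx => by
        have hx' : b x < 0 := hx
        simp only [Pi.zero_apply]
        linarith
    have h4 : ∫ x in F, (-b x) ∂μ = 0 := le_antisymm h2 (integral_nonneg_of_ae h3)
    have h5 := (setIntegral_eq_zero_iff_of_nonneg_ae h3 hint1).mp h4
    have h6 : ∀ᵐ _x ∂μ.restrict F, False := by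
      filter_upwards [h5, ae_restrict_mem hF] with x hx1 hx2
      have hx' : b x < 0 := hx2
      have : -b x = 0 := hx1
      linarith
    rw [← Measure.restrict_eq_zero]
    exact MeasureTheory.ae_eq_bot.mp (Filter.eventually_false_iff_eq_bot.mp h6)
  have hb1 : ∀ᵐ x ∂μ, b x ≤ 1 := by
    have := measure_eq_zero_iff_ae_notMem.mp hEnull
    filter_upwards [this] with x hx
    simpa using hx
  have hb0 : ∀ᵐ x ∂μ, 0 ≤ b x := by
    have := measure_eq_zero_iff_ae_notMem.mp hFnull
    filter_upwards [this] with x hx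
    simpa using hx
  have hbound : ∀ᵐ x ∂μ, ‖alim x‖ ≤ 1 := by
    filter_upwards [hbae, hb1, hb0] with x h h1 h2
    rw [h, Real.norm_eq_abs, abs_le]
    constructor <;> linarith
  have := eLpNorm_le_of_ae_bound (p := ⊤) (μ := μ) hbound
  simpa using this
end

section
/- Suppose (w_γ) and (p_γ) = (w_γ^γ) are nonnegative measurable functions on a finite measure space with w_γ → w and p_γ → p in L², and for every ν > 0 there is γ₀ such that w_γ^{γ+1} ≥ w_γ^γ − ν for γ ≥ γ₀, and the product w_γ^γ · w_γ converges to p·w in L¹. If additionally 0 ≤ w ≤ 1 a.e. and p ≥ 0 a.e., then p(w − 1) = 0 almost everywhere. -/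
open MeasureTheory Filter
open scoped ENNReal

/-- If `w_γ → w` and `p_γ = w_γ^γ → p` in `L²`, `w_γ^{γ+1} ≥ w_γ^γ − ν` eventually for each `ν>0`,
the products `w_γ^γ · w_γ → p·w` in `L¹`, `0 ≤ w ≤ 1` a.e. and `p ≥ 0` a.e., then
`p(w−1) = 0` almost everywhere. -/
theorem complementarity_relation {α : Type*} [MeasurableSpace α] (μ : Measure α)
    [IsFiniteMeasure μ] (w : ℝ → α → ℝ) (wl p : α → ℝ)
    (hwmeas : ∀ γ, Measurable (w γ)) (hwpos : ∀ γ x, 0 ≤ w γ x)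
    (hwlmeas : Measurable wl) (hpmeas : Measurable p)
    (hwconv : Tendsto (fun γ : ℝ => eLpNorm (fun x => w γ x - wl x) 2 μ) atTop (nhds 0))
    (hpconv : Tendsto (fun γ : ℝ => eLpNorm (fun x => w γ x ^ γ - p x) 2 μ) atTop (nhds 0))
    (hineq : ∀ ν : ℝ, 0 < ν → ∃ γ₀ : ℝ, ∀ γ ≥ γ₀, ∀ᵐ x ∂μ, w γ x ^ γ - ν ≤ w γ x ^ (γ + 1))
    (hprod : Tendsto (fun γ : ℝ => eLpNorm (fun x => w γ x ^ γ * w γ x - p x * wl x) 1 μ)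
      atTop (nhds 0))
    (hwl : ∀ᵐ x ∂μ, 0 ≤ wl x ∧ wl x ≤ 1) (hp : ∀ᵐ x ∂μ, 0 ≤ p x) :
    ∀ᵐ x ∂μ, p x * (wl x - 1) = 0 := by
  classical
  set B : ℕ → α → ℝ := fun n x => w n x ^ (n : ℝ) with hBdef
  set C : ℕ → α → ℝ := fun n x => w n x ^ (n : ℝ) * w n x with hCdef
  have hBm : ∀ n, Measurable (B n) := fun n => (hwmeas _).pow measurable_const
  have hCm : ∀ n, Measurable (C n) := fun n => (hBm n).mul (hwmeas _)
  -- convergence in measure of B to p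
  have hBconv : Tendsto (fun n : ℕ => eLpNorm (B n - p) 2 μ) atTop (nhds 0) :=
    hpconv.comp tendsto_natCast_atTop_atTop
  have hBtm : TendstoInMeasure μ B atTop p :=
    tendstoInMeasure_of_tendsto_eLpNorm (by norm_num)
      (fun n => (hBm n).aestronglyMeasurable) hpmeas.aestronglyMeasurable hBconv
  -- convergence in measure of C to p * wl
  have hCconv : Tendsto (fun n : ℕ => eLpNorm (C n - fun x => p x * wl x) 1 μ) atTop (nhds 0) :=
    hprod.comp tendsto_natCast_atTop_atTop
  have hCtm : TendstoInMeasure μ C atTop (fun x => p x * wl x) :=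
    tendstoInMeasure_of_tendsto_eLpNorm (by norm_num)
      (fun n => (hCm n).aestronglyMeasurable) (hpmeas.mul hwlmeas).aestronglyMeasurable hCconv
  obtain ⟨ns, hns, hnsae⟩ := hBtm.exists_seq_tendsto_ae
  have hCtm' : TendstoInMeasure μ (fun i => C (ns i)) atTop (fun x => p x * wl x) :=
    fun ε hε => (hCtm ε hε).comp hns.tendsto_atTop
  obtain ⟨ms, hms, hmsae⟩ := hCtm'.exists_seq_tendsto_ae
  set φ : ℕ → ℕ := fun n => ns (ms n) with hφdef
  have hφ : Tendsto (fun n => (φ n : ℝ)) atTop atTop :=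
    tendsto_natCast_atTop_atTop.comp (hns.comp hms).tendsto_atTop
  have key : ∀ ν : ℝ, 0 < ν → ∀ᵐ x ∂μ, p x - ν ≤ p x * wl x := by
    intro ν hν
    obtain ⟨γ₀, hγ₀⟩ := hineq ν hν
    obtain ⟨N, hN⟩ := eventually_atTop.1 (hφ.eventually_ge_atTop (max γ₀ 1))
    have hae : ∀ᵐ x ∂μ, ∀ n : ℕ, N ≤ n → B (φ n) x - ν ≤ C (φ n) x := by
      rw [ae_all_iff]
      intro n
      by_cases hn : N ≤ n
      · have hγ : max γ₀ 1 ≤ (φ n : ℝ) := hN n hn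
        have h1 : (1 : ℝ) ≤ (φ n : ℝ) := le_trans (le_max_right _ _) hγ
        filter_upwards [hγ₀ ((φ n : ℝ)) (le_trans (le_max_left _ _) hγ)] with x hx _
        have hpow : w (φ n : ℝ) x ^ ((φ n : ℝ) + 1)
            = w (φ n : ℝ) x ^ (φ n : ℝ) * w (φ n : ℝ) x := by
          rcases eq_or_lt_of_le (hwpos (φ n : ℝ) x) with h0 | h0
          · rw [← h0, Real.zero_rpow (by positivity),
              Real.zero_rpow (ne_of_gt (by linarith : (0:ℝ) < (φ n : ℝ))), zero_mul]
          · exact Real.rpow_add_one (ne_of_gt h0) _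
        simp only [hBdef, hCdef]
        rw [← hpow]
        exact hx
      · exact ae_of_all _ fun x h => absurd h hn
    filter_upwards [hae, hnsae, hmsae] with x hx hBx hCx
    have hB' : Tendsto (fun n => B (φ n) x - ν) atTop (nhds (p x - ν)) :=
      (hBx.comp hms.tendsto_atTop).sub_const ν
    exact le_of_tendsto_of_tendsto hB' hCx (eventually_atTop.2 ⟨N, hx⟩)
  have key2 : ∀ᵐ x ∂μ, ∀ k : ℕ, p x - 1 / (k + 1) ≤ p x * wl x :=
    ae_all_iff.2 fun k => key (1 / (k + 1)) (by positivity)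
  filter_upwards [key2, hwl, hp] with x hx hwlx hpx
  obtain ⟨hwl0, hwl1⟩ := hwlx
  have hle : p x ≤ p x * wl x := by
    by_contra h
    push_neg at h
    obtain ⟨k, hk⟩ := exists_nat_one_div_lt (sub_pos.2 h)
    have := hx k
    linarith
  have h1 : p x * (wl x - 1) ≤ 0 :=
    mul_nonpos_of_nonneg_of_nonpos hpx (by linarith)
  have h2 : 0 ≤ p x * (wl x - 1) := by nlinarith
  exact le_antisymm h1 h2
end

section
/- (Grönwall comparison with p-dependent nonlinearity.) Let η : [0,T] → [0,∞) be absolutely continuous with η(0) = 0 and η'(t) ≤ C·p·max(η(t)^{1−1/p}, η(t)) for a.e. t, for every integer p ≥ 1, where C > 0 is independent of p. Then η(t) ≤ (Ct)^p for all t < 1/C and every p, and hence η ≡ 0 on [0, 1/(2C)]. -/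
/-! Fix `p` and `ε > 0` and compare `η` with `g s = (ε + C s) ^ p`. As long as `η ≤ g ≤ 1`, both
`η ^ (1 - 1/p)` and `η` are at most `g ^ (1 - 1/p) = (ε + C s) ^ (p - 1)`, so `η' ≤ g'`. Since
`η 0 = 0 < g 0`, at a first contact time `c` one would get `η c ≤ g c - g 0 < g c`; hence `η < g`
throughout. Letting `ε → 0` gives `η t ≤ (C t) ^ p`, and for `C t ≤ 1/2` the bounds `2 ^ (-p)`
force `η t = 0`. -/

open MeasureTheory intervalIntegral Set Filter Topology

theorem forall_mem_Icc_lt_of_continuousOn {α β : Type*} [ConditionallyCompleteLinearOrder α]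
    [TopologicalSpace α] [OrderTopology α] [LinearOrder β] [TopologicalSpace β]
    [OrderClosedTopology β] {φ ψ : α → β} {a b : α}
    (hφ : ContinuousOn φ (Icc a b)) (hψ : ContinuousOn ψ (Icc a b)) (ha : φ a < ψ a)
    (hstep : ∀ c ∈ Ioc a b, (∀ s ∈ Ico a c, φ s < ψ s) → φ c < ψ c) :
    ∀ s ∈ Icc a b, φ s < ψ s := by
  by_contra! hcross
  obtain ⟨s, hs, hsψφ⟩ := hcross
  have hclosed : IsClosed (Icc a b ∩ (fun s => (ψ s, φ s)) ⁻¹' {q | q.1 ≤ q.2}) :=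
    (hψ.prodMk hφ).preimage_isClosed_of_isClosed isClosed_Icc isClosed_le_prod
  obtain ⟨c, ⟨hc, hcψφ⟩, hfirst⟩ :=
    (isCompact_Icc.of_isClosed_subset hclosed inter_subset_left).exists_isLeast ⟨s, hs, hsψφ⟩
  have hac : a < c := hc.1.lt_of_ne (by rintro rfl; exact hcψφ.not_gt ha)
  refine (hstep c ⟨hac, hc.2⟩ fun s hs => ?_).not_ge hcψφ
  by_contra! h
  exact (hfirst ⟨⟨hs.1, hs.2.le.trans hc.2⟩, h⟩).not_gt hs.2

theorem Real.pow_rpow_one_sub_inv {x : ℝ} (hx : 0 ≤ x) {p : ℕ} (hp : 1 ≤ p) :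
    (x ^ p) ^ (1 - 1 / (p : ℝ)) = x ^ (p - 1) := by
  have hexp : (p : ℝ) * (1 - 1 / p) = ((p - 1 : ℕ) : ℝ) := by
    rw [Nat.cast_sub hp]
    field_simp
    ring
  rw [← Real.rpow_natCast_mul hx, hexp, Real.rpow_natCast]

theorem max_rpow_one_sub_inv_le_pow_pred {x y : ℝ} {p : ℕ} (hp : 1 ≤ p) (hy : 0 ≤ y)
    (hyx : y ≤ x ^ p) (hx₀ : 0 ≤ x) (hx₁ : x ≤ 1) :
    max (y ^ (1 - 1 / (p : ℝ))) y ≤ x ^ (p - 1) := by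
  have hexp : 0 ≤ 1 - 1 / (p : ℝ) :=
    sub_nonneg.2 (div_le_one_of_le₀ (by exact_mod_cast hp) (by positivity))
  exact max_le ((Real.rpow_le_rpow hy hyx hexp).trans_eq (Real.pow_rpow_one_sub_inv hx₀ hp))
    (hyx.trans (pow_le_pow_of_le_one hx₀ hx₁ (Nat.sub_le p 1)))

section Comparison

variable {C T : ℝ} {η f : ℝ → ℝ} {p : ℕ}

theorem le_add_mul_pow_of_eq_integral (hC : 0 ≤ C) (hp : 1 ≤ p) (hT : 0 ≤ T) {ε : ℝ}
    (hε : 0 < ε) (hεT : ε + C * T ≤ 1) (hηpos : ∀ t ∈ Icc 0 T, 0 ≤ η t)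
    (hfint : IntegrableOn f (Icc 0 T)) (hη : ∀ t ∈ Icc 0 T, η t = ∫ s in (0 : ℝ)..t, f s)
    (hf : ∀ᵐ s ∂volume.restrict (Icc 0 T), f s ≤ C * p * max (η s ^ (1 - 1 / (p : ℝ))) (η s)) :
    η T ≤ (ε + C * T) ^ p := by
  set g : ℝ → ℝ := fun s => (ε + C * s) ^ p
  set g' : ℝ → ℝ := fun s => C * p * (ε + C * s) ^ (p - 1)
  have hg : ∀ s, HasDerivAt g (g' s) s := fun s => by
    simpa [g', mul_comm, mul_assoc, mul_left_comm] using
      (((hasDerivAt_id s).const_mul C).const_add ε).fun_pow p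
  have hg'int : ∀ c, IntervalIntegrable g' volume 0 c := fun c =>
    Continuous.intervalIntegrable (by fun_prop) _ _
  have hηcont : ContinuousOn η (Icc 0 T) := by
    have := continuousOn_primitive_interval (μ := volume) (a := 0) (b := T) (f := f)
      (by rwa [uIcc_of_le hT])
    rw [uIcc_of_le hT] at this
    exact this.congr hη
  refine (forall_mem_Icc_lt_of_continuousOn (ψ := g) hηcont (by fun_prop) ?_ ?_ T ⟨hT, le_rfl⟩).le
  · rw [hη 0 ⟨le_rfl, hT⟩, integral_same]
    simp only [g, mul_zero, add_zero]
    positivity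
  intro c hc hbelow
  have hcT : Icc 0 c ⊆ Icc 0 T := Icc_subset_Icc_right hc.2
  have hbound : f ≤ᵐ[volume.restrict (Icc 0 c)] g' := by
    rw [← Measure.restrict_congr_set Ico_ae_eq_Icc]
    filter_upwards [ae_restrict_of_ae_restrict_of_subset (Ico_subset_Icc_self.trans hcT) hf,
      ae_restrict_mem measurableSet_Ico] with s hfs hs
    have hsT : s ∈ Icc 0 T := hcT (Ico_subset_Icc_self hs)
    refine hfs.trans (mul_le_mul_of_nonneg_left ?_ (by positivity))
    refine max_rpow_one_sub_inv_le_pow_pred hp (hηpos s hsT) (hbelow s hs).le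
      (by have := hs.1; positivity) ?_
    nlinarith [hsT.2]
  calc η c = ∫ s in (0 : ℝ)..c, f s := hη c (hcT ⟨hc.1.le, le_rfl⟩)
    _ ≤ ∫ s in (0 : ℝ)..c, g' s := integral_mono_ae_restrict hc.1.le
        ((intervalIntegrable_iff_integrableOn_Icc_of_le hc.1.le).2 (hfint.mono_set hcT)) (hg'int c) hbound
    _ = g c - g 0 := integral_eq_sub_of_hasDerivAt (fun s _ => hg s) (hg'int c)
    _ < g c := by simp only [g, mul_zero, add_zero]; linarith [pow_pos hε p]

theorem le_mul_pow_of_eq_integral (hC : 0 ≤ C) (hp : 1 ≤ p) (hT : 0 ≤ T) (hCT : C * T < 1)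
    (hηpos : ∀ t ∈ Icc 0 T, 0 ≤ η t)
    (hfint : IntegrableOn f (Icc 0 T)) (hη : ∀ t ∈ Icc 0 T, η t = ∫ s in (0 : ℝ)..t, f s)
    (hf : ∀ᵐ s ∂volume.restrict (Icc 0 T), f s ≤ C * p * max (η s ^ (1 - 1 / (p : ℝ))) (η s)) :
    η T ≤ (C * T) ^ p := by
  have hlim : Tendsto (fun ε : ℝ => (ε + C * T) ^ p) (𝓝[>] 0) (𝓝 ((C * T) ^ p)) := by
    have hcont : Continuous fun ε : ℝ => (ε + C * T) ^ p := by fun_prop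
    simpa using hcont.continuousWithinAt.tendsto (x := 0) (s := Ioi 0)
  refine ge_of_tendsto hlim ?_
  filter_upwards [Ioo_mem_nhdsGT (show (0 : ℝ) < 1 - C * T by linarith)] with ε hε
  exact le_add_mul_pow_of_eq_integral hC hp hT hε.1 (by linarith [hε.2]) hηpos hfint hη hf

end Comparison

theorem gronwall_p_nonlinearity_general (C T : ℝ) (hC : 0 < C)
    (η f : ℝ → ℝ) (hη0 : η 0 = 0) (hηpos : ∀ t ∈ Set.Icc 0 T, 0 ≤ η t)
    (hfint : IntegrableOn f (Set.Icc 0 T))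
    (hAC : ∀ t ∈ Set.Icc 0 T, η t = η 0 + ∫ s in (0 : ℝ)..t, f s)
    (hf : ∀ᵐ s ∂(volume.restrict (Set.Icc 0 T)), ∀ p : ℕ, 1 ≤ p →
      f s ≤ C * p * max (η s ^ (1 - 1 / (p : ℝ))) (η s)) :
    (∀ p : ℕ, 1 ≤ p → ∀ t, 0 ≤ t → t ≤ T → t < 1 / C → η t ≤ (C * t) ^ p)
      ∧ ∀ t, 0 ≤ t → t ≤ T → t ≤ 1 / (2 * C) → η t = 0 := by
  have hpow : ∀ p : ℕ, 1 ≤ p → ∀ t, 0 ≤ t → t ≤ T → t < 1 / C → η t ≤ (C * t) ^ p := by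
    intro p hp t ht₀ htT htC
    have hsub : Icc 0 t ⊆ Icc 0 T := Icc_subset_Icc_right htT
    refine le_mul_pow_of_eq_integral hC.le hp ht₀ (by rwa [lt_div_iff₀' hC] at htC)
      (fun s hs => hηpos s (hsub hs)) (hfint.mono_set hsub) (fun s hs => ?_)
      ((ae_restrict_of_ae_restrict_of_subset hsub hf).mono fun s hs => hs p hp)
    rw [hAC s (hsub hs), hη0, zero_add]
  refine ⟨hpow, fun t ht₀ htT ht2C => le_antisymm ?_ (hηpos t ⟨ht₀, htT⟩)⟩
  have hCt : C * t ≤ 1 / 2 := by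
    rw [le_div_iff₀ (by positivity)] at ht2C
    linarith
  refine ge_of_tendsto (tendsto_pow_atTop_nhds_zero_of_lt_one (r := (1 / 2 : ℝ)) (by norm_num)
    (by norm_num)) ?_
  filter_upwards [eventually_ge_atTop 1] with p hp
  exact (hpow p hp t ht₀ htT (by rw [lt_div_iff₀' hC]; linarith)).trans
    (pow_le_pow_left₀ (by positivity) hCt p)

/-- Grönwall comparison with `p`-dependent nonlinearity: if `η ≥ 0` is absolutely continuous on
`[0,T]` with `η(0) = 0` and `η' ≤ C·p·max(η^{1−1/p}, η)` a.e. for every `p ≥ 1`, then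
`η(t) ≤ (Ct)^p` for `t < 1/C`, and `η ≡ 0` on `[0, 1/(2C)]`. -/
theorem gronwall_p_nonlinearity (C T : ℝ) (hC : 0 < C) (hT : 0 < T)
    (η f : ℝ → ℝ) (hη0 : η 0 = 0) (hηpos : ∀ t ∈ Set.Icc 0 T, 0 ≤ η t)
    (hfint : IntegrableOn f (Set.Icc 0 T))
    (hAC : ∀ t ∈ Set.Icc 0 T, η t = η 0 + ∫ s in (0 : ℝ)..t, f s)
    (hf : ∀ᵐ s ∂(volume.restrict (Set.Icc 0 T)), ∀ p : ℕ, 1 ≤ p →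
      f s ≤ C * p * max (η s ^ (1 - 1 / (p : ℝ))) (η s)) :
    (∀ p : ℕ, 1 ≤ p → ∀ t, 0 ≤ t → t ≤ T → t < 1 / C → η t ≤ (C * t) ^ p)
      ∧ ∀ t, 0 ≤ t → t ≤ T → t ≤ 1 / (2 * C) → η t = 0 :=
  gronwall_p_nonlinearity_general C T hC η f hη0 hηpos hfint hAC hf
end
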